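/- Let 𝒜 be an abelian category and let K be a bounded cochain complex in 𝒜 such that for every integer i the cohomology object H^i(K) is a projective object of 𝒜. Then in the derived category D(𝒜), K is isomorphic to the direct sum over i of the shifted objects H^i(K)[-i]. -/

import Mathlib

/-!
Since `H^i(K)` is projective, the epimorphism `Z^i(K) ⟶ H^i(K)` from the cycles splits. The
splittings, followed by the inclusions `Z^i(K) ⟶ K^i`, form a chain map from the complex with
terms `H^i(K)` and zero differentials to `K`, and this map induces the identity on cohomology,
so it is a quasi-isomorphism and becomes an isomorphism in the derived category.
-/

open CategoryTheory CategoryTheory.Limits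

universe w v u

section

variable {𝒜 : Type u} [Category.{v} 𝒜] [Abelian 𝒜]

/-- The cochain complex whose term in degree `i` is the `i`-th cohomology object
`H^i(K)` of `K`, with all differentials zero.  This complex is the direct sum
`⊕ᵢ H^i(K)[-i]` of the complexes `H^i(K)[-i]`, each of which consists of `H^i(K)`
placed in degree `i` with zeros elsewhere. -/
noncomputable def gradedHomologyComplex (K : CochainComplex 𝒜 ℤ) : CochainComplex 𝒜 ℤ where
  X i := K.homology i
  d _ _ := 0
  shape _ _ _ := rfl
  d_comp_d' := by intros; simp

namespace gradedHomologyComplex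

variable (K : CochainComplex 𝒜 ℤ)

instance isIso_homologyπ (i : ℤ) : IsIso ((gradedHomologyComplex K).homologyπ i) :=
  (gradedHomologyComplex K).isIso_homologyπ (i - 1) i (by simp) rfl

instance isIso_iCycles (i : ℤ) : IsIso ((gradedHomologyComplex K).iCycles i) :=
  (gradedHomologyComplex K).isIso_iCycles i (i + 1) (by simp) rfl

noncomputable def homOfCycles (s : ∀ i, K.homology i ⟶ K.cycles i) :
    gradedHomologyComplex K ⟶ K where
  f i := s i ≫ K.iCycles i
  comm' i j _ := by simp [gradedHomologyComplex]

variable {K}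

lemma cyclesMap_homOfCycles (s : ∀ i, K.homology i ⟶ K.cycles i) (i : ℤ) :
    HomologicalComplex.cyclesMap (homOfCycles K s) i =
      (gradedHomologyComplex K).iCycles i ≫ s i := by
  rw [← cancel_mono (K.iCycles i), HomologicalComplex.cyclesMap_i]
  -- `(gradedHomologyComplex K).X i` is `K.homology i` only up to unfolding, so `rw` cannot
  -- reassociate composites through it; the terms below are checked up to definitional equality.
  exact (Category.assoc _ _ _).symm

lemma homologyπ_homologyMap_homOfCycles (s : ∀ i, K.homology i ⟶ K.cycles i)
    (hs : ∀ i, s i ≫ K.homologyπ i = 𝟙 _) (i : ℤ) :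
    (gradedHomologyComplex K).homologyπ i ≫ HomologicalComplex.homologyMap (homOfCycles K s) i =
      (gradedHomologyComplex K).iCycles i := by
  rw [HomologicalComplex.homologyπ_naturality, cyclesMap_homOfCycles]
  exact (Category.assoc _ _ _).trans ((congrArg _ (hs i)).trans (Category.comp_id _))

lemma quasiIso_homOfCycles (s : ∀ i, K.homology i ⟶ K.cycles i)
    (hs : ∀ i, s i ≫ K.homologyπ i = 𝟙 _) : QuasiIso (homOfCycles K s) := by
  rw [quasiIso_iff]
  intro i
  rw [quasiIsoAt_iff_isIso_homologyMap]
  have : IsIso ((gradedHomologyComplex K).homologyπ i ≫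
      HomologicalComplex.homologyMap (homOfCycles K s) i) := by
    rw [homologyπ_homologyMap_homOfCycles s hs]
    exact isIso_iCycles K i
  exact IsIso.of_isIso_comp_left ((gradedHomologyComplex K).homologyπ i) _

end gradedHomologyComplex

theorem split_lem_2_1_abelian_general [HasDerivedCategory.{w} 𝒜]
    (K : CochainComplex 𝒜 ℤ)
    (hproj : ∀ i : ℤ, Projective (K.homology i)) :
    Nonempty (DerivedCategory.Q.obj K ≅ DerivedCategory.Q.obj (gradedHomologyComplex K)) := by
  have hsplit (i : ℤ) : ∃ s : K.homology i ⟶ K.cycles i, s ≫ K.homologyπ i = 𝟙 _ :=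
    have := hproj i
    ⟨Projective.factorThru (𝟙 _) (K.homologyπ i), Projective.factorThru_comp _ _⟩
  choose s hs using hsplit
  have := gradedHomologyComplex.quasiIso_homOfCycles s hs
  exact ⟨(asIso (DerivedCategory.Q.map (gradedHomologyComplex.homOfCycles K s))).symm⟩

/-- Let `𝒜` be an abelian category and `K` a bounded cochain complex in `𝒜`
such that every cohomology object `H^i(K)` is projective. Then, in the derived category
`D(𝒜)`, `K` is isomorphic to the direct sum over `i` of the shifted objects `H^i(K)[-i]`,
i.e. to the complex with terms `H^i(K)` and zero differentials. -/
theorem split_lem_2_1_abelian [HasDerivedCategory.{w} 𝒜]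
    (K : CochainComplex 𝒜 ℤ)
    (hbdd : ∃ a b : ℤ, ∀ i : ℤ, (i < a ∨ b < i) → IsZero (K.X i))
    (hproj : ∀ i : ℤ, Projective (K.homology i)) :
    Nonempty (DerivedCategory.Q.obj K ≅ DerivedCategory.Q.obj (gradedHomologyComplex K)) :=
  split_lem_2_1_abelian_general K hproj

end
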